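/- Let (A, μ, α_A, β_A, R_A) be a λ-Rota-Baxter BiHom-associative algebra and (M, ▷, ◁, α_M, β_M, R_M) a λ-Rota-Baxter BiHom-bimodule over it. Define new operations a ≻ m = R_A(a)▷m, a ≺ m = a▷R_M(m) + λ a▷m, m ≻ a = R_M(m)◁a, m ≺ a = m◁R_A(a) + λ m◁a, and on A: a ≺ b = aR_A(b) + λab, a ≻ b = R_A(a)b. Then (M, ≺, ≻, α_M, β_M) is a BiHom-dendriform bimodule over the BiHom-dendriform algebra (A, ≺, ≻, α_A, β_A). -/
import Mathlib


/-- BiHom-bimodule over a BiHom-associative algebra `(A, μ, α, β)`. -/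
def BHBimod {K A M : Type*} [Field K] [AddCommGroup A] [Module K A]
    [AddCommGroup M] [Module K M]
    (μ : A →ₗ[K] A →ₗ[K] A) (α β : A →ₗ[K] A)
    (l : A →ₗ[K] M →ₗ[K] M) (r : M →ₗ[K] A →ₗ[K] M)
    (αM βM : M →ₗ[K] M) : Prop :=
  (∀ m, αM (βM m) = βM (αM m)) ∧
  (∀ a m, αM (l a m) = l (α a) (αM m)) ∧
  (∀ a m, βM (l a m) = l (β a) (βM m)) ∧
  (∀ a b m, l (α a) (l b m) = l (μ a b) (βM m)) ∧
  (∀ m a, αM (r m a) = r (αM m) (α a)) ∧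
  (∀ m a, βM (r m a) = r (βM m) (β a)) ∧
  (∀ m a b, r (αM m) (μ a b) = r (r m a) (β b)) ∧
  (∀ a m b, l (α a) (r m b) = r (l a m) (β b))

/-- BiHom-dendriform algebra `(A, ≺ = p, ≻ = s, α, β)`. -/
def BHDendAlg {K A : Type*} [Field K] [AddCommGroup A] [Module K A]
    (p s : A →ₗ[K] A →ₗ[K] A) (α β : A →ₗ[K] A) : Prop :=
  (∀ a, α (β a) = β (α a)) ∧
  (∀ a b, α (p a b) = p (α a) (α b)) ∧ (∀ a b, α (s a b) = s (α a) (α b)) ∧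
  (∀ a b, β (p a b) = p (β a) (β b)) ∧ (∀ a b, β (s a b) = s (β a) (β b)) ∧
  (∀ a b c, p (p a b) (β c) = p (α a) (p b c) + p (α a) (s b c)) ∧
  (∀ a b c, s (α a) (p b c) = p (s a b) (β c)) ∧
  (∀ a b c, s (α a) (s b c) = s (p a b) (β c) + s (s a b) (β c))

/-- BiHom-dendriform bimodule over `(A, p, s, α, β)`:
`pl, sl : A ⊗ M → M` are `a ≺ m`, `a ≻ m`; `pr, sr : M ⊗ A → M` are `m ≺ a`, `m ≻ a`. -/
def BHDendBimod {K A M : Type*} [Field K] [AddCommGroup A] [Module K A]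
    [AddCommGroup M] [Module K M]
    (p s : A →ₗ[K] A →ₗ[K] A) (α β : A →ₗ[K] A)
    (pl sl : A →ₗ[K] M →ₗ[K] M) (pr sr : M →ₗ[K] A →ₗ[K] M)
    (αM βM : M →ₗ[K] M) : Prop :=
  (∀ m, αM (βM m) = βM (αM m)) ∧
  (∀ a m, αM (pl a m) = pl (α a) (αM m)) ∧ (∀ m a, αM (pr m a) = pr (αM m) (α a)) ∧
  (∀ a m, αM (sl a m) = sl (α a) (αM m)) ∧ (∀ m a, αM (sr m a) = sr (αM m) (α a)) ∧
  (∀ a m, βM (pl a m) = pl (β a) (βM m)) ∧ (∀ m a, βM (pr m a) = pr (βM m) (β a)) ∧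
  (∀ a m, βM (sl a m) = sl (β a) (βM m)) ∧ (∀ m a, βM (sr m a) = sr (βM m) (β a)) ∧
  (∀ a b m, pl (p a b) (βM m) = pl (α a) (pl b m) + pl (α a) (sl b m)) ∧
  (∀ a b m, sl (α a) (pl b m) = pl (s a b) (βM m)) ∧
  (∀ a b m, sl (α a) (sl b m) = sl (p a b) (βM m) + sl (s a b) (βM m)) ∧
  (∀ a m b, pr (pl a m) (β b) = pl (α a) (pr m b) + pl (α a) (sr m b)) ∧
  (∀ a m b, sl (α a) (pr m b) = pr (sl a m) (β b)) ∧
  (∀ a m b, sl (α a) (sr m b) = sr (pl a m) (β b) + sr (sl a m) (β b)) ∧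
  (∀ m a b, pr (pr m a) (β b) = pr (αM m) (p a b) + pr (αM m) (s a b)) ∧
  (∀ m a b, sr (αM m) (p a b) = pr (sr m a) (β b)) ∧
  (∀ m a b, sr (αM m) (s a b) = sr (pr m a) (β b) + sr (sr m a) (β b))

/-- a `lam`-Rota-Baxter BiHom-bimodule over a `lam`-Rota-Baxter
BiHom-associative algebra yields a BiHom-dendriform bimodule over the induced
BiHom-dendriform algebra. -/
theorem stmt4 (K A M : Type*) [Field K] [AddCommGroup A] [Module K A]
    [AddCommGroup M] [Module K M] (lam : K)
    (μ : A →ₗ[K] A →ₗ[K] A) (αA βA RA : A →ₗ[K] A)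
    (l : A →ₗ[K] M →ₗ[K] M) (r : M →ₗ[K] A →ₗ[K] M)
    (αM βM RM : M →ₗ[K] M)
    -- `(A, μ, αA, βA, RA)` is a `lam`-Rota-Baxter BiHom-associative algebra
    (hAcomm : ∀ a, αA (βA a) = βA (αA a))
    (hαmul : ∀ a b, αA (μ a b) = μ (αA a) (αA b))
    (hβmul : ∀ a b, βA (μ a b) = μ (βA a) (βA b))
    (hassoc : ∀ a b c, μ (αA a) (μ b c) = μ (μ a b) (βA c))
    (hRα : ∀ a, αA (RA a) = RA (αA a)) (hRβ : ∀ a, βA (RA a) = RA (βA a))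
    (hRB : ∀ a b, μ (RA a) (RA b) = RA (μ a (RA b)) + RA (μ (RA a) b) + lam • RA (μ a b))
    -- `(M, l, r, αM, βM, RM)` is a `lam`-Rota-Baxter BiHom-bimodule
    (hbimod : BHBimod μ αA βA l r αM βM)
    (hRMα : ∀ m, αM (RM m) = RM (αM m)) (hRMβ : ∀ m, βM (RM m) = RM (βM m))
    (hRBl : ∀ a m, l (RA a) (RM m) = RM (l a (RM m) + l (RA a) m + lam • l a m))
    (hRBr : ∀ m a, r (RM m) (RA a) = RM (r m (RA a) + r (RM m) a + lam • r m a))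
    -- the new operations
    (pA sA : A →ₗ[K] A →ₗ[K] A)
    (hpA : ∀ a b, pA a b = μ a (RA b) + lam • μ a b)
    (hsA : ∀ a b, sA a b = μ (RA a) b)
    (pl sl : A →ₗ[K] M →ₗ[K] M) (pr sr : M →ₗ[K] A →ₗ[K] M)
    (hpl : ∀ a m, pl a m = l a (RM m) + lam • l a m)
    (hsl : ∀ a m, sl a m = l (RA a) m)
    (hpr : ∀ m a, pr m a = r m (RA a) + lam • r m a)
    (hsr : ∀ m a, sr m a = r (RM m) a) :
    BHDendAlg pA sA αA βA ∧ BHDendBimod pA sA αA βA pl sl pr sr αM βM := by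

  obtain ⟨hMcomm, hαl, hβl, hlassoc, hαr, hβr, hrassoc, hlr⟩ := hbimod
  constructor
  · refine ⟨hAcomm, ?_, ?_, ?_, ?_, ?_, ?_, ?_⟩
    · intro a b; simp [hpA, hαmul, hRα, map_add, map_smul]
    · intro a b; simp [hsA, hαmul, hRα]
    · intro a b; simp [hpA, hβmul, hRβ, map_add, map_smul]
    · intro a b; simp [hsA, hβmul, hRβ]
    · intro a b c
      simp only [hpA, hsA, map_add, map_smul, LinearMap.add_apply, LinearMap.smul_apply]
      rw [← hRβ, ← hassoc a (RA b) (RA c), ← hassoc a b (RA c), ← hassoc a (RA b) c,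
        ← hassoc a b c, hRB]
      simp only [map_add, map_smul]
      abel
    · intro a b c
      simp only [hpA, hsA, map_add, map_smul, LinearMap.add_apply, LinearMap.smul_apply]
      rw [← hRβ, ← hRα, hassoc (RA a) b (RA c), hassoc (RA a) b c]
    · intro a b c
      simp only [hpA, hsA, map_add, map_smul, LinearMap.add_apply, LinearMap.smul_apply]
      rw [← hRα, hassoc (RA a) (RA b) c, hRB]
      simp only [map_add, map_smul, LinearMap.add_apply, LinearMap.smul_apply]
      abel
  · refine ⟨hMcomm, ?_, ?_, ?_, ?_, ?_, ?_, ?_, ?_, ?_, ?_, ?_, ?_, ?_, ?_, ?_, ?_, ?_⟩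
    · intro a m; simp [hpl, hαl, hRMα, map_add, map_smul]
    · intro m a; simp [hpr, hαr, hRα, map_add, map_smul]
    · intro a m; simp [hsl, hαl, hRα]
    · intro m a; simp [hsr, hαr, hRMα]
    · intro a m; simp [hpl, hβl, hRMβ, map_add, map_smul]
    · intro m a; simp [hpr, hβr, hRβ, map_add, map_smul]
    · intro a m; simp [hsl, hβl, hRβ]
    · intro m a; simp [hsr, hβr, hRMβ]
    · intro a b m
      simp only [hpl, hsl, hpA, map_add, map_smul, LinearMap.add_apply, LinearMap.smul_apply]
      rw [← hRMβ, ← hlassoc a (RA b) (RM m), ← hlassoc a b (RM m), ← hlassoc a (RA b) m,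
        ← hlassoc a b m, hRBl]
      simp only [map_add, map_smul]
      abel
    · intro a b m
      simp only [hpl, hsl, hsA, map_add, map_smul, LinearMap.add_apply, LinearMap.smul_apply]
      rw [← hRMβ, ← hRα, hlassoc (RA a) b (RM m), hlassoc (RA a) b m]
    · intro a b m
      simp only [hpl, hsl, hpA, hsA, map_add, map_smul, LinearMap.add_apply,
        LinearMap.smul_apply]
      rw [← hRα, hlassoc (RA a) (RA b) m, hRB]
      simp only [map_add, map_smul, LinearMap.add_apply, LinearMap.smul_apply]
      abel
    · intro a m b
      simp only [hpl, hpr, hsr, map_add, map_smul, LinearMap.add_apply, LinearMap.smul_apply]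
      rw [← hRβ, ← hlr a (RM m) (RA b), ← hlr a m (RA b), ← hlr a (RM m) b, ← hlr a m b, hRBr]
      simp only [map_add, map_smul]
      abel
    · intro a m b
      simp only [hpr, hsl, map_add, map_smul, LinearMap.add_apply, LinearMap.smul_apply]
      rw [← hRβ, ← hRα, hlr (RA a) m (RA b), hlr (RA a) m b]
    · intro a m b
      simp only [hpl, hsl, hsr, map_add, map_smul, LinearMap.add_apply, LinearMap.smul_apply]
      rw [← hRα, hlr (RA a) (RM m) b, hRBl]
      simp only [map_add, map_smul, LinearMap.add_apply, LinearMap.smul_apply]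
      abel
    · intro m a b
      simp only [hpr, hpA, hsA, map_add, map_smul, LinearMap.add_apply, LinearMap.smul_apply]
      rw [← hRβ, ← hrassoc m (RA a) (RA b), ← hrassoc m a (RA b), ← hrassoc m (RA a) b,
        ← hrassoc m a b, hRB]
      simp only [map_add, map_smul, LinearMap.add_apply, LinearMap.smul_apply]
      abel
    · intro m a b
      simp only [hpr, hsr, hpA, map_add, map_smul, LinearMap.add_apply, LinearMap.smul_apply]
      rw [← hRβ, ← hRMα, hrassoc (RM m) a (RA b), hrassoc (RM m) a b]
    · intro m a b
      simp only [hpr, hsr, hsA, map_add, map_smul, LinearMap.add_apply, LinearMap.smul_apply]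
      rw [← hRMα, hrassoc (RM m) (RA a) b, hRBr]
      simp only [map_add, map_smul, LinearMap.add_apply, LinearMap.smul_apply]
      abel
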